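/- arXiv:2305.06083 — 2 statements merged into one kernel-verified Lean document; each statement's English description precedes it below -/
import Mathlib

section
/- For every 1 ≤ t ≤ n−1 and every r ∈ ℤ, the H-module V(t,r) is simple, i.e. V(t,r) ≠ 0 and its only H-submodules are 0 and V(t,r). -/
open scoped TensorProduct

noncomputable section

namespace SmallQuasiQuantumGroup

variable (k : Type) [Field k]

inductive QGRel (n : ℕ) (q : k) :
    FreeAlgebra k (Fin 4) → FreeAlgebra k (Fin 4) → Prop
  | KKinv : QGRel n q (FreeAlgebra.ι k 2 * FreeAlgebra.ι k 3) 1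
  | KinvK : QGRel n q (FreeAlgebra.ι k 3 * FreeAlgebra.ι k 2) 1
  | KE : QGRel n q (FreeAlgebra.ι k 2 * FreeAlgebra.ι k 0 * FreeAlgebra.ι k 3)
      (q ^ 2 • FreeAlgebra.ι k 0)
  | KF : QGRel n q (FreeAlgebra.ι k 2 * FreeAlgebra.ι k 1 * FreeAlgebra.ι k 3)
      ((q ^ 2)⁻¹ • FreeAlgebra.ι k 1)
  | EF : QGRel n q
      (FreeAlgebra.ι k 0 * FreeAlgebra.ι k 1 - FreeAlgebra.ι k 1 * FreeAlgebra.ι k 0)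
      ((q - q⁻¹)⁻¹ • (FreeAlgebra.ι k 2 - FreeAlgebra.ι k 3))
  | Epow : QGRel n q (FreeAlgebra.ι k 0 ^ n) 0
  | Fpow : QGRel n q (FreeAlgebra.ι k 1 ^ n) 0
  | Kpow : QGRel n q (FreeAlgebra.ι k 2 ^ n ^ 2) 1

def QG (n : ℕ) (q : k) : Type := RingQuot (QGRel k n q)

instance (n : ℕ) (q : k) : Ring (QG k n q) := inferInstanceAs (Ring (RingQuot _))
instance (n : ℕ) (q : k) : Algebra k (QG k n q) := inferInstanceAs (Algebra k (RingQuot _))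

def gE (n : ℕ) (q : k) : QG k n q := RingQuot.mkAlgHom k (QGRel k n q) (FreeAlgebra.ι k 0)
def gF (n : ℕ) (q : k) : QG k n q := RingQuot.mkAlgHom k (QGRel k n q) (FreeAlgebra.ι k 1)
def gK (n : ℕ) (q : k) : QG k n q := RingQuot.mkAlgHom k (QGRel k n q) (FreeAlgebra.ι k 2)
def gKi (n : ℕ) (q : k) : QG k n q := RingQuot.mkAlgHom k (QGRel k n q) (FreeAlgebra.ι k 3)

def eIdem (n : ℕ) (q : k) (i : ℕ) : QG k n q :=
  (n : k)⁻¹ • ∑ t ∈ Finset.range n, q ^ (t * i) • gK k n q ^ (t * n)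

/-! ### The simple modules `V(t,r)` and `V_l` -/

/-- The scalar `γ_j` appearing in the `F`-action on the module `V(t,r)`
(here `q = Q^n` where `Q = 𝐪` is the primitive `n²`-th root of unity). -/
def gammaCoef (n : ℕ) (Q : k) (t : ℕ) (r : ℤ) (j : ℕ) : k :=
  (Q ^ n - (Q ^ n)⁻¹)⁻¹ *
    (Q ^ (-(t : ℤ)) * ((Q ^ n) ^ (-(2 * r)) - (Q ^ n) ^ (-(2 * (r + (j : ℤ))))) /
        (1 - (Q ^ n) ^ (-2 : ℤ)) -
      Q ^ (t : ℤ) * ((Q ^ n) ^ (2 * r) - (Q ^ n) ^ (2 * (r + (j : ℤ)))) /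
        (1 - (Q ^ n) ^ (2 : ℤ)))

/-- `IsTypeV k n Q t r V` says that the `H`-module `V` is (a copy of) the `n`-dimensional
module `V(t,r)`: it has a `k`-basis `v₀, …, v_{n-1}` (indexed here from `0`, corresponding to
`v₁, …, v_n` in the paper) with `K vᵢ = 𝐪^t q^{2(r+i)} vᵢ`, `E vᵢ = vᵢ₊₁` (`E v_{n-1} = 0`),
`F v₀ = 0` and `F vᵢ = γ_i v_{i-1}` for `i ≥ 1`. -/
def IsTypeV (n : ℕ) (Q : k) (t : ℕ) (r : ℤ) (V : Type) [AddCommGroup V] [Module k V]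
    [Module (QG k n (Q ^ n)) V] : Prop :=
  ∃ v : Module.Basis (Fin n) k V,
    (∀ i : Fin n, gK k n (Q ^ n) • v i =
      (Q ^ (t : ℤ) * (Q ^ n) ^ (2 * (r + (i.1 : ℤ)))) • v i) ∧
    (∀ i : Fin n, gE k n (Q ^ n) • v i = if h : i.1 + 1 < n then v ⟨i.1 + 1, h⟩ else 0) ∧
    (∀ i : Fin n, i.1 = 0 → gF k n (Q ^ n) • v i = 0) ∧
    (∀ i : Fin n, 0 < i.1 → gF k n (Q ^ n) • v i =
      gammaCoef k n Q t r i.1 • v ⟨i.1 - 1, lt_of_le_of_lt (Nat.sub_le _ _) i.2⟩)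

/-- The scalar `β_i(l)` appearing in the `F`-action on the simple module `V_l`. -/
def betaCoef (n : ℕ) (Q : k) (l i : ℕ) : k :=
  (∑ s ∈ Finset.range i, (Q ^ n) ^ (2 * s)) * (1 - (Q ^ n) ^ (2 * ((i : ℤ) - (l : ℤ)))) /
    ((Q ^ n) ^ (2 * (i : ℤ) - (l : ℤ)) - (Q ^ n) ^ (2 * (i : ℤ) - (l : ℤ) - 2))

/-- `IsTypeVl k n Q l V` says that the `H`-module `V` is (a copy of) the `l`-dimensional
simple module `V_l`: it has a `k`-basis `m₀, …, m_{l-1}` (indexed here from `0`, corresponding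
to `m₁, …, m_l` in the paper) with `K mᵢ = q^{2i+1-l} mᵢ`, `E mᵢ = mᵢ₊₁` (`E m_{l-1} = 0`),
`F m₀ = 0` and `F mᵢ = β_i(l) m_{i-1}` for `i ≥ 1`. -/
def IsTypeVl (n : ℕ) (Q : k) (l : ℕ) (V : Type) [AddCommGroup V] [Module k V]
    [Module (QG k n (Q ^ n)) V] : Prop :=
  ∃ m : Module.Basis (Fin l) k V,
    (∀ i : Fin l, gK k n (Q ^ n) • m i = (Q ^ n) ^ (2 * (i.1 : ℤ) + 1 - (l : ℤ)) • m i) ∧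
    (∀ i : Fin l, gE k n (Q ^ n) • m i = if h : i.1 + 1 < l then m ⟨i.1 + 1, h⟩ else 0) ∧
    (∀ i : Fin l, i.1 = 0 → gF k n (Q ^ n) • m i = 0) ∧
    (∀ i : Fin l, 0 < i.1 → gF k n (Q ^ n) • m i =
      betaCoef k n Q l i.1 • m ⟨i.1 - 1, lt_of_le_of_lt (Nat.sub_le _ _) i.2⟩)

/-! ### Corner algebras `He_i` -/

/-- For a central idempotent `a`, the set `{x | xa = x ∧ ax = x}` (which equals `Ra`)
is a `k`-submodule of `R`. -/
def cornerSubmodule (R : Type) [Ring R] [Algebra k R] (a : R) : Submodule k R where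
  carrier := {x | x * a = x ∧ a * x = x}
  add_mem' := fun hx hy => ⟨by rw [add_mul, hx.1, hy.1], by rw [mul_add, hx.2, hy.2]⟩
  zero_mem' := ⟨zero_mul a, mul_zero a⟩
  smul_mem' := fun c x hx => ⟨by rw [smul_mul_assoc, hx.1], by rw [mul_smul_comm, hx.2]⟩

/-- The corner ring `Ra = {x | xa = x ∧ ax = x}` of an idempotent `a`; it is a `k`-algebra
with identity element `a`. -/
def Corner (R : Type) [Ring R] [Algebra k R] (a : R) (_ : IsIdempotentElem a) : Type :=
  ↥(cornerSubmodule k R a)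

namespace Corner

variable {R : Type} [Ring R] [Algebra k R] {a : R} {ha : IsIdempotentElem a}

instance : AddCommGroup (Corner k R a ha) :=
  inferInstanceAs (AddCommGroup ↥(cornerSubmodule k R a))

instance : Module k (Corner k R a ha) :=
  inferInstanceAs (Module k ↥(cornerSubmodule k R a))

/-- The underlying element of `R` of an element of the corner ring. -/
def val (x : Corner k R a ha) : R := Subtype.val x

instance : Ring (Corner k R a ha) :=
  { (inferInstanceAs (AddCommGroup ↥(cornerSubmodule k R a)) :
      AddCommGroup (Corner k R a ha)) with
    mul := fun x y => ⟨x.1 * y.1,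
      by rw [mul_assoc, y.2.1], by rw [← mul_assoc, x.2.2]⟩
    one := ⟨a, ha, ha⟩
    mul_assoc := fun x y z => Subtype.ext (mul_assoc x.1 y.1 z.1)
    one_mul := fun x => Subtype.ext x.2.2
    mul_one := fun x => Subtype.ext x.2.1
    left_distrib := fun x y z => Subtype.ext (mul_add x.1 y.1 z.1)
    right_distrib := fun x y z => Subtype.ext (add_mul x.1 y.1 z.1)
    zero_mul := fun x => Subtype.ext (zero_mul x.1)
    mul_zero := fun x => Subtype.ext (mul_zero x.1) }

instance : Algebra k (Corner k R a ha) :=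
  Algebra.ofModule (fun c x y => Subtype.ext (smul_mul_assoc c x.1 y.1))
    (fun c x y => Subtype.ext (mul_smul_comm c x.1 y.1))

end Corner
/-! ### The comultiplication data -/

/-- The idempotent `1_s = (1/n²) ∑_{r=0}^{n²-1} 𝐪^{sr} K^r` of `H`. -/
def oneIdem (n : ℕ) (Q : k) (s : ℕ) : QG k n (Q ^ n) :=
  ((n : k) ^ 2)⁻¹ • ∑ r ∈ Finset.range (n ^ 2), Q ^ (s * r) • gK k n (Q ^ n) ^ r

/-- `T₁ = ∑_{i=0}^{2n-1} 1_i`. -/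
def Tone (n : ℕ) (Q : k) : QG k n (Q ^ n) := ∑ i ∈ Finset.range (2 * n), oneIdem k n Q i
/-- `T₂ = ∑_{i=2n}^{n²-1} 1_i`. -/
def Ttwo (n : ℕ) (Q : k) : QG k n (Q ^ n) := ∑ i ∈ Finset.Ico (2 * n) (n ^ 2), oneIdem k n Q i
/-- `T₃ = ∑_{i=0}^{n²-2n-1} 1_i`. -/
def Tthree (n : ℕ) (Q : k) : QG k n (Q ^ n) :=
  ∑ i ∈ Finset.range (n ^ 2 - 2 * n), oneIdem k n Q i
/-- `T₄ = ∑_{i=n²-2n}^{n²-1} 1_i`. -/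
def Tfour (n : ℕ) (Q : k) : QG k n (Q ^ n) :=
  ∑ i ∈ Finset.Ico (n ^ 2 - 2 * n) (n ^ 2), oneIdem k n Q i

/-- `IsDelta k n Q Δ` says that the `k`-algebra map `Δ : H → H ⊗ H` is the comultiplication
of the small quasi-quantum group, i.e. takes the prescribed values on `K`, `K⁻¹`, `E`, `F`. -/
def IsDelta (n : ℕ) (Q : k)
    (Δ : QG k n (Q ^ n) →ₐ[k] QG k n (Q ^ n) ⊗[k] QG k n (Q ^ n)) : Prop :=
  Δ (gK k n (Q ^ n)) = gK k n (Q ^ n) ⊗ₜ[k] gK k n (Q ^ n) ∧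
  Δ (gKi k n (Q ^ n)) = gKi k n (Q ^ n) ⊗ₜ[k] gKi k n (Q ^ n) ∧
  Δ (gE k n (Q ^ n)) =
    (gE k n (Q ^ n) ⊗ₜ[k] 1) *
        (Tone k n Q ⊗ₜ[k] gK k n (Q ^ n) ^ (n ^ 2 - n) + Ttwo k n Q ⊗ₜ[k] 1) +
      gK k n (Q ^ n) ⊗ₜ[k] gE k n (Q ^ n) ∧
  Δ (gF k n (Q ^ n)) =
    (gF k n (Q ^ n) ⊗ₜ[k] 1) *
        (Tthree k n Q ⊗ₜ[k] gK k n (Q ^ n) ^ (n ^ 2 - 1) +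
          Tfour k n Q ⊗ₜ[k] gK k n (Q ^ n) ^ (n - 1)) +
      1 ⊗ₜ[k] gF k n (Q ^ n)

/-- The action of an algebra `A` on a module `M`, as a `k`-linear map `A →ₗ[k] (M →ₗ[k] M)`. -/
def endoMap (A M : Type) [Ring A] [Algebra k A] [AddCommGroup M] [Module k M] [Module A M]
    [IsScalarTower k A M] : A →ₗ[k] M →ₗ[k] M where
  toFun a :=
    { toFun := fun m => a • m
      map_add' := fun _ _ => smul_add _ _ _
      map_smul' := fun c m => smul_comm a c m }
  map_add' a b := LinearMap.ext fun m => add_smul a b m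
  map_smul' c a := LinearMap.ext fun m => smul_assoc c a m

/-- `SmulViaDelta k n Q Δ M N` says that the given `H`-module structure on `M ⊗[k] N` is the
one obtained from the `H`-module structures of `M` and `N` through the comultiplication `Δ`:
`h` acts on `M ⊗ N` as the operator `(ρ_M ⊗ ρ_N)(Δ(h))`. -/
def SmulViaDelta (n : ℕ) (Q : k)
    (Δ : QG k n (Q ^ n) →ₐ[k] QG k n (Q ^ n) ⊗[k] QG k n (Q ^ n)) (M N : Type)
    [AddCommGroup M] [Module k M] [Module (QG k n (Q ^ n)) M]
    [IsScalarTower k (QG k n (Q ^ n)) M]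
    [AddCommGroup N] [Module k N] [Module (QG k n (Q ^ n)) N]
    [IsScalarTower k (QG k n (Q ^ n)) N]
    [Module (QG k n (Q ^ n)) (M ⊗[k] N)] : Prop :=
  ∀ (h : QG k n (Q ^ n)) (x : M ⊗[k] N),
    h • x = TensorProduct.homTensorHomMap (RingHom.id k) M N M N
      (TensorProduct.map (endoMap k (QG k n (Q ^ n)) M) (endoMap k (QG k n (Q ^ n)) N)
        (Δ h)) x

/-! ### The elements `T^i_j` and `A^{ij}_k` -/

/-- The idempotent `T^i_j = (1/n) ∑_{s=0}^{n-1} 𝐪^{((j-1)n+i)s} K^s e_i` of `He_i`. -/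
def Tij (n : ℕ) (Q : k) (i j : ℕ) : QG k n (Q ^ n) :=
  (n : k)⁻¹ • ∑ s ∈ Finset.range n,
    Q ^ (((j - 1) * n + i) * s) • (gK k n (Q ^ n) ^ s * eIdem k n (Q ^ n) i)

/-- The scalar `a^{ij}_{k1}` for `k ≥ 2`. -/
def aOne (n : ℕ) (Q : k) (i j kk : ℕ) : k :=
  ((Q ^ n) ^ (2 * ((kk : ℤ) - 1)) * Q ^ ((1 - (j : ℤ)) * n - (i : ℤ)) -
      (Q ^ n) ^ (2 * (1 - (kk : ℤ))) * Q ^ ((i : ℤ) - (1 - (j : ℤ)) * n)) /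
    (Q ^ n - (Q ^ n)⁻¹)

/-- The scalars `a^{ij}_{ks}` (`1 ≤ s ≤ k ≤ n`), defined by `a^{ij}_{kk} = 1`,
`a^{ij}_{k1}` as in `aOne`, and the recursion `a^{ij}_{ks} = a^{ij}_{k1} + a^{ij}_{k-1,s-1}`. -/
def aCoef (n : ℕ) (Q : k) (i j : ℕ) : ℕ → ℕ → k
  | _, 0 => 0
  | kk, 1 => if kk = 1 then 1 else aOne k n Q i j kk
  | kk, s + 2 => if kk = s + 2 then 1 else aOne k n Q i j kk + aCoef n Q i j (kk - 1) (s + 1)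

/-- The element `A^{ij}_k = ∑_{p=0}^{k-1} (∏_{t=0}^{p} a^{ij}_{k,k-t}) E^{k-1-p} F^{n-1-p} e_i`
of `H`. -/
def Aelem (n : ℕ) (Q : k) (i j kk : ℕ) : QG k n (Q ^ n) :=
  ∑ p ∈ Finset.range kk,
    (∏ t ∈ Finset.range (p + 1), aCoef k n Q i j kk (kk - t)) •
      (gE k n (Q ^ n) ^ (kk - 1 - p) * gF k n (Q ^ n) ^ (n - 1 - p) * eIdem k n (Q ^ n) i)

/-- The integer `r_{k,j}`. -/
def rkj (n kk j : ℕ) : ℤ :=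
  if (2 * (kk : ℤ) - (j : ℤ)) % 2 = 0 then (2 * (kk : ℤ) - (j : ℤ)) / 2
  else ((n : ℤ) + 2 * (kk : ℤ) - (j : ℤ)) / 2

/-! ### The algebra `B_i` of Statement 1 -/

/-- Defining relations of the algebra `B_i`, on the generators
`0 ↦ x`, `1 ↦ y`, `2 ↦ z`, `3 ↦ z'`. -/
inductive BRel (n i : ℕ) (q : k) :
    FreeAlgebra k (Fin 4) → FreeAlgebra k (Fin 4) → Prop
  | zz' : BRel n i q (FreeAlgebra.ι k 2 * FreeAlgebra.ι k 3) 1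
  | z'z : BRel n i q (FreeAlgebra.ι k 3 * FreeAlgebra.ι k 2) 1
  | zx : BRel n i q (FreeAlgebra.ι k 2 * FreeAlgebra.ι k 0 * FreeAlgebra.ι k 3)
      (q ^ 2 • FreeAlgebra.ι k 0)
  | zy : BRel n i q (FreeAlgebra.ι k 2 * FreeAlgebra.ι k 1 * FreeAlgebra.ι k 3)
      ((q ^ 2)⁻¹ • FreeAlgebra.ι k 1)
  | xy : BRel n i q
      (FreeAlgebra.ι k 0 * FreeAlgebra.ι k 1 - FreeAlgebra.ι k 1 * FreeAlgebra.ι k 0)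
      ((q - q⁻¹)⁻¹ • (FreeAlgebra.ι k 2 - FreeAlgebra.ι k 3))
  | xpow : BRel n i q (FreeAlgebra.ι k 0 ^ n) 0
  | ypow : BRel n i q (FreeAlgebra.ι k 1 ^ n) 0
  | zpow : BRel n i q (FreeAlgebra.ι k 2 ^ n) (q ^ (n - i) • 1)

/-- Auxiliary purely field-theoretic computation underlying the nonvanishing of `γ_j`. -/
theorem aux_core (q X Y T : k) (hq : q ≠ 0) (hX : X ≠ 0) (hY : Y ≠ 0) (hT : T ≠ 0)
    (hd1 : 1 - q*q ≠ 0) (hd2 : 1 - (q*q)⁻¹ ≠ 0) (hY2 : 1 - Y*Y ≠ 0)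
    (hD : T*T*(X*X)*(X*X)*(Y*Y) - q*q ≠ 0) :
    (q - q⁻¹)⁻¹ * (T⁻¹ * ((X*X)⁻¹ - (X*X*(Y*Y))⁻¹) / (1 - (q*q)⁻¹)
      - T * (X*X - X*X*(Y*Y)) / (1 - q*q)) ≠ 0 := by
  have hqq : q - q⁻¹ ≠ 0 := by
    intro h
    have h3 := congrArg (q * ·) h
    simp only [mul_sub, mul_zero, mul_inv_cancel₀ hq] at h3
    exact hd1 (by linear_combination -h3)
  refine mul_ne_zero (inv_ne_zero hqq) ?_
  set A := T⁻¹ * ((X*X)⁻¹ - (X*X*(Y*Y))⁻¹) with hA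
  set B := T * (X*X - X*X*(Y*Y)) with hB
  set d2 := 1 - (q*q)⁻¹ with hd2'
  set d1 := 1 - q*q with hd1'
  set M := T*(X*X)*(Y*Y)*(q*q) with hM
  intro h0
  have hkey : (A / d2 - B / d1) * (d2 * (d1 * M)) = A * (d1 * M) - B * (d2 * M) := by
    have c1 : d1⁻¹ * d1 = 1 := inv_mul_cancel₀ hd1
    have c2 : d2⁻¹ * d2 = 1 := inv_mul_cancel₀ hd2
    rw [div_eq_mul_inv, div_eq_mul_inv]
    linear_combination (A * (d1 * M)) * c2 - (B * (d2 * M)) * c1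
  rw [h0, zero_mul] at hkey
  have hkey2 : A * (d1 * M) - B * (d2 * M)
      = (1 - Y*Y) * d1 * (T*T*(X*X)*(X*X)*(Y*Y) - q*q) := by
    rw [hA, hB, hd2', hd1', hM]
    have hne : (Y^2*q^2*T*X^2) ≠ 0 :=
      mul_ne_zero (mul_ne_zero (mul_ne_zero (pow_ne_zero _ hY) (pow_ne_zero _ hq)) hT)
        (pow_ne_zero _ hX)
    have hc : (Y^2*q^2*T*X^2) * (Y⁻¹^2*q⁻¹^2*T⁻¹*X⁻¹^2) = 1 := by field_simp
    field_simp
    ring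
  rw [hkey2] at hkey
  exact (mul_ne_zero (mul_ne_zero hY2 hd1) hD) hkey.symm

/-- The scalars `γ_j` are nonzero for `1 ≤ j ≤ n - 1`. -/
theorem aux_gamma_ne (n : ℕ) (hn : 2 < n) (hodd : Odd n) (Q : k)
    (hQ : IsPrimitiveRoot Q (n ^ 2)) (t : ℕ) (ht1 : 1 ≤ t) (ht : t ≤ n - 1) (r : ℤ)
    (j : ℕ) (hj1 : 1 ≤ j) (hj : j < n) : gammaCoef k n Q t r j ≠ 0 := by
  have hn0 : 0 < n := by omega
  have hQ0 : Q ≠ 0 := hQ.ne_zero (by positivity)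
  have hq0 : (Q:k)^n ≠ 0 := pow_ne_zero _ hQ0
  have hq : IsPrimitiveRoot ((Q:k)^n) n := hQ.pow (by positivity) (sq n)
  have eX : ((Q:k)^n) ^ (2*r) = ((Q^n)^r) * ((Q^n)^r) := by
    rw [show (2*r) = r + r by ring, zpow_add₀ hq0]
  have eXY : ((Q:k)^n) ^ (2*(r + (j:ℤ))) =
      ((Q^n)^r) * ((Q^n)^r) * (((Q^n)^(j:ℤ)) * ((Q^n)^(j:ℤ))) := by
    rw [show 2*(r+(j:ℤ)) = (r + r) + ((j:ℤ) + (j:ℤ)) by ring, zpow_add₀ hq0,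
      zpow_add₀ hq0, zpow_add₀ hq0]
  have e2 : ((Q:k)^n) ^ (2:ℤ) = (Q^n) * (Q^n) := by
    rw [show (2:ℤ) = 1 + 1 by norm_num, zpow_add₀ hq0, zpow_one]
  unfold gammaCoef
  rw [zpow_neg, zpow_neg, zpow_neg, zpow_neg, eX, eXY, e2]
  set q : k := Q^n with hqdef
  set X : k := q^r with hX
  set Y : k := q^(j:ℤ) with hY
  set T : k := Q^(t:ℤ) with hT
  have hq2 : q*q ≠ 1 := by
    intro h
    have : q ^ (2:ℕ) = 1 := by rw [pow_two]; exact h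
    exact hq.pow_ne_one_of_pos_of_lt (by norm_num) hn this
  apply aux_core k q X Y T hq0 (zpow_ne_zero _ hq0) (zpow_ne_zero _ hq0) (zpow_ne_zero _ hQ0)
  · intro h; exact hq2 (by linear_combination -h)
  · intro h
    apply hq2
    have h2 : (q*q)⁻¹ = 1 := by linear_combination -h
    rw [← inv_inv (q*q), h2, inv_one]
  · intro h
    have hYY : q ^ ((2*j : ℕ) : ℤ) = 1 := by
      push_cast
      rw [show ((2:ℤ)*j) = (j:ℤ) + (j:ℤ) by ring, zpow_add₀ hq0, ← hY]
      linear_combination -h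
    rw [zpow_natCast] at hYY
    have hdvd : n ∣ 2 * j := hq.dvd_of_pow_eq_one _ hYY
    have hnj : n ∣ j := (hodd.coprime_two_right).dvd_of_dvd_mul_left hdvd
    have := Nat.le_of_dvd (by omega) hnj
    omega
  · intro h
    have hTT : T*T*(X*X)*(X*X)*(Y*Y) = q*q := by linear_combination h
    have eq1 : T*T*(X*X)*(X*X)*(Y*Y) = Q ^ (2*(t:ℤ) + (n:ℤ)*(4*r) + (n:ℤ)*(2*(j:ℤ))) := by
      rw [hT, hX, hY, hqdef, ← zpow_natCast Q n, ← zpow_mul, ← zpow_mul]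
      rw [← zpow_add₀ hQ0, ← zpow_add₀ hQ0, ← zpow_add₀ hQ0, ← zpow_add₀ hQ0,
        ← zpow_add₀ hQ0, ← zpow_add₀ hQ0]
      ring_nf
    have eq2 : q*q = Q ^ ((n:ℤ)*2) := by
      rw [hqdef, ← zpow_natCast Q n, ← zpow_add₀ hQ0]; ring_nf
    rw [eq1, eq2] at hTT
    have hz : Q ^ (2*(t:ℤ) + (n:ℤ)*(4*r) + (n:ℤ)*(2*(j:ℤ)) - (n:ℤ)*2) = 1 := by
      rw [zpow_sub₀ hQ0, hTT, div_self (zpow_ne_zero _ hQ0)]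
    have hdvd : ((n^2 : ℕ) : ℤ) ∣ (2*(t:ℤ) + (n:ℤ)*(4*r) + (n:ℤ)*(2*(j:ℤ)) - (n:ℤ)*2) :=
      (hQ.zpow_eq_one_iff_dvd _).mp hz
    have hdvd2 : ((n^2:ℕ):ℤ) ∣ 2 * ((t:ℤ) + (n:ℤ)*(2*r + (j:ℤ) - 1)) := by
      convert hdvd using 1; ring
    have hoddn2 : ¬ (2:ℤ) ∣ ((n^2:ℕ):ℤ) := by
      rcases hodd with ⟨m, hm⟩
      intro ⟨c, hc⟩
      push_cast at hc
      have hm' : (n:ℤ) = 2*m+1 := by exact_mod_cast hm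
      have hsq : (n:ℤ)^2 = 2*((n:ℤ)*m) + (n:ℤ) := by linear_combination (n:ℤ)*hm'
      omega
    have hcop : IsCoprime ((n^2:ℕ):ℤ) 2 :=
      ((Int.prime_two.coprime_iff_not_dvd).mpr hoddn2).symm
    have hdvd3 : ((n^2:ℕ):ℤ) ∣ ((t:ℤ) + (n:ℤ)*(2*r + (j:ℤ) - 1)) :=
      hcop.dvd_of_dvd_mul_left hdvd2
    have hdvdn : (n:ℤ) ∣ ((t:ℤ) + (n:ℤ)*(2*r + (j:ℤ) - 1)) :=
      dvd_trans (by push_cast [sq]; exact Dvd.intro _ rfl) hdvd3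
    have hdvdt : (n:ℤ) ∣ (t:ℤ) := by
      have := dvd_sub hdvdn (Dvd.intro _ (rfl : (n:ℤ) * (2*r + (j:ℤ) - 1) = _))
      simpa using this
    have hle : (n:ℤ) ≤ (t:ℤ) := Int.le_of_dvd (by exact_mod_cast ht1) hdvdt
    have htn : t < n := by omega
    have : (n:ℤ) < (n:ℤ) := lt_of_le_of_lt hle (by exact_mod_cast htn)
    exact absurd this (lt_irrefl _)

/-- For every `1 ≤ t ≤ n-1` and every `r ∈ ℤ`, the `H`-module `V(t,r)` is
simple. -/
theorem statement4 [IsAlgClosed k] [CharZero k] (n : ℕ) (hn : 2 < n) (hodd : Odd n)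
    (Q : k) (hQ : IsPrimitiveRoot Q (n ^ 2)) (t : ℕ) (ht1 : 1 ≤ t) (ht : t ≤ n - 1) (r : ℤ)
    (V : Type) [AddCommGroup V] [Module k V] [Module (QG k n (Q ^ n)) V]
    [IsScalarTower k (QG k n (Q ^ n)) V] (hV : IsTypeV k n Q t r V) :
    IsSimpleModule (QG k n (Q ^ n)) V := by
  classical
  obtain ⟨v, hK, hE, hF0, hF⟩ := hV
  have hn0 : 0 < n := by omega
  have hQ0 : Q ≠ 0 := hQ.ne_zero (by positivity)
  have hq0 : (Q : k) ^ n ≠ 0 := pow_ne_zero _ hQ0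
  have hq : IsPrimitiveRoot ((Q : k) ^ n) n := hQ.pow (by positivity) (sq n)
  let lam : Fin n → k := fun i => Q ^ (t : ℤ) * (Q ^ n) ^ (2 * (r + (i.1 : ℤ)))
  have hKlam : ∀ i : Fin n, gK k n (Q ^ n) • v i = lam i • v i := hK
  have hodd' : ∀ s : ℤ, ((n:ℤ)) ∣ 2 * s → (n:ℤ) ∣ s := by
    intro s hd
    have h2 : ¬ (2:ℤ) ∣ (n:ℤ) := by
      rcases hodd with ⟨m, hm⟩
      intro ⟨c, hc⟩; omega
    exact (((Int.prime_two.coprime_iff_not_dvd).mpr h2).symm).dvd_of_dvd_mul_left hd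
  have hlam_inj : ∀ i j : Fin n, lam i = lam j → i = j := by
    intro i j h
    have h1 : ((Q:k)^n) ^ (2*(r+(i.1:ℤ))) = (Q^n) ^ (2*(r+(j.1:ℤ))) :=
      mul_left_cancel₀ (zpow_ne_zero _ hQ0) h
    have h2 : ((Q:k)^n) ^ (2*(r+(i.1:ℤ)) - 2*(r+(j.1:ℤ))) = 1 := by
      rw [zpow_sub₀ hq0, h1, div_self (zpow_ne_zero _ hq0)]
    have h3 : (n:ℤ) ∣ 2*(r+(i.1:ℤ)) - 2*(r+(j.1:ℤ)) := (hq.zpow_eq_one_iff_dvd _).mp h2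
    have h4 : (n:ℤ) ∣ 2 * ((i.1:ℤ) - (j.1:ℤ)) := by
      convert h3 using 1; ring
    have h5 : (n:ℤ) ∣ ((i.1:ℤ) - (j.1:ℤ)) := hodd' _ h4
    have h6 : n ∣ ((i.1:ℤ) - (j.1:ℤ)).natAbs := by
      simpa using Int.natAbs_dvd_natAbs.mpr h5
    have h7 : ((i.1:ℤ) - (j.1:ℤ)).natAbs < n := by
      have hi := i.2; have hj := j.2
      omega
    have h8 : ((i.1:ℤ) - (j.1:ℤ)).natAbs = 0 := Nat.eq_zero_of_dvd_of_lt h6 h7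
    exact Fin.ext (by omega)
  -- scalar commuting helper and k-scalar membership in QG-submodules
  have hsc : ∀ (a : QG k n (Q ^ n)) (c : k) (x : V), a • (c • x) = c • (a • x) := by
    intro a c x
    rw [← algebraMap_smul (QG k n (Q ^ n)) c x, ← algebraMap_smul (QG k n (Q ^ n)) c (a • x),
      ← mul_smul, ← mul_smul, Algebra.commutes]
  -- coordinates of K-action
  have hKall : ∀ y : V, gK k n (Q ^ n) • y = ∑ l, (lam l * v.repr y l) • v l := by
    intro y
    conv_lhs => rw [← v.sum_repr y]
    rw [Finset.smul_sum]
    refine Finset.sum_congr rfl fun l _ => ?_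
    rw [hsc, hKlam l, smul_smul, mul_comm (v.repr y l) (lam l)]
  have hreprK : ∀ (y : V) (l : Fin n), v.repr (gK k n (Q ^ n) • y) l = lam l * v.repr y l := by
    intro y l
    rw [hKall y, Module.Basis.repr_sum_self]
  -- nontriviality
  haveI : Nontrivial V := ⟨v ⟨0, hn0⟩, 0, v.ne_zero _⟩
  refine { toIsSimpleOrder := ⟨fun N => ?_⟩ }
  rcases eq_or_ne N ⊥ with hbot | hbot
  · exact Or.inl hbot
  refine Or.inr ?_
  obtain ⟨x, hxN, hx0⟩ := (Submodule.ne_bot_iff N).mp hbot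
  have hsmulk : ∀ (c : k) (y : V), y ∈ N → c • y ∈ N := by
    intro c y hy
    rw [← algebraMap_smul (QG k n (Q ^ n)) c y]
    exact N.smul_mem _ hy
  -- Step A: N contains some basis vector
  have stepA : ∀ m : ℕ, ∀ y : V, y ∈ N → y ≠ 0 → (v.repr y).support.card ≤ m →
      ∃ i, v i ∈ N := by
    intro m
    induction m with
    | zero =>
      intro y hyN hy0 hcard
      exfalso
      apply hy0
      have hempty : (v.repr y).support = ∅ := Finset.card_eq_zero.mp (Nat.le_zero.mp hcard)
      have h0 : v.repr y = 0 := Finsupp.support_eq_empty.mp hempty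
      simpa using congrArg v.repr.symm h0
    | succ m ih =>
      intro y hyN hy0 hcard
      have hne : (v.repr y).support.Nonempty := by
        rw [Finsupp.support_nonempty_iff]
        intro h0
        exact hy0 (by simpa using congrArg v.repr.symm h0)
      obtain ⟨i, hi⟩ := hne
      by_cases hex : ∃ j ∈ (v.repr y).support, j ≠ i
      · obtain ⟨j, hjsup, hji⟩ := hex
        have hzN : gK k n (Q ^ n) • y - lam j • y ∈ N :=
          N.sub_mem (N.smul_mem _ hyN) (hsmulk _ _ hyN)
        set z := gK k n (Q ^ n) • y - lam j • y with hzdef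
        have hrepz : ∀ l, v.repr z l = (lam l - lam j) * v.repr y l := by
          intro l
          rw [hzdef, map_sub, Finsupp.sub_apply, hreprK y l, map_smul, Finsupp.smul_apply,
            smul_eq_mul]
          ring
        have hzi : v.repr z i ≠ 0 := by
          rw [hrepz i]
          exact mul_ne_zero (sub_ne_zero.mpr fun hh => hji (hlam_inj j i hh.symm))
            (Finsupp.mem_support_iff.mp hi)
        have hz0 : z ≠ 0 := by
          intro h0
          apply hzi
          rw [h0, map_zero]
          rfl
        have hsub : (v.repr z).support ⊆ (v.repr y).support.erase j := by
          intro l hl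
          rw [Finset.mem_erase]
          have hl' := Finsupp.mem_support_iff.mp hl
          rw [hrepz l] at hl'
          refine ⟨fun h0 => hl' (by rw [h0]; ring), Finsupp.mem_support_iff.mpr fun h0 =>
            hl' (by rw [h0, mul_zero])⟩
        have hcz : (v.repr z).support.card ≤ m := by
          have h1 := Finset.card_le_card hsub
          rw [Finset.card_erase_of_mem hjsup] at h1
          have h2 : 1 ≤ (v.repr y).support.card := Finset.card_pos.mpr ⟨i, hi⟩
          omega
        exact ih z hzN hz0 hcz
      · push_neg at hex
        have hci : v.repr y i ≠ 0 := Finsupp.mem_support_iff.mp hi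
        have hyy : y = v.repr y i • v i := by
          have hsum := v.sum_repr y
          rw [Finset.sum_eq_single i (fun l _ hli => by
              rw [Finsupp.notMem_support_iff.mp (fun hl => hli (hex l hl)), zero_smul])
            (fun h => absurd (Finset.mem_univ i) h)] at hsum
          exact hsum.symm
        refine ⟨i, ?_⟩
        have hvi : v i = (v.repr y i)⁻¹ • y := by
          set c := v.repr y i with hc
          rw [hyy, smul_smul, inv_mul_cancel₀ hci, one_smul]
        rw [hvi]
        exact hsmulk _ _ hyN
  obtain ⟨i0, hi0⟩ := stepA ((v.repr x).support.card) x hxN hx0 le_rfl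
  -- Step B: from any basis vector, get the top one
  have stepB : ∀ d : ℕ, ∀ i : Fin n, i.1 + d = n - 1 → v i ∈ N →
      v ⟨n - 1, by omega⟩ ∈ N := by
    intro d
    induction d with
    | zero =>
      intro i hi hiN
      have : i = ⟨n - 1, by omega⟩ := Fin.ext (by simp only [Fin.val_mk]; omega)
      rwa [this] at hiN
    | succ d ih =>
      intro i hi hiN
      have hlt : i.1 + 1 < n := by omega
      have h2 := N.smul_mem (gE k n (Q ^ n)) hiN
      rw [hE i, dif_pos hlt] at h2
      exact ih ⟨i.1 + 1, hlt⟩ (by simp only []; omega) h2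
  have htop : v ⟨n - 1, by omega⟩ ∈ N := stepB (n - 1 - i0.1) i0 (by have := i0.2; omega) hi0
  -- Step C: descend using F
  have stepC : ∀ d : ℕ, d < n → v ⟨n - 1 - d, by omega⟩ ∈ N := by
    intro d
    induction d with
    | zero => intro _; simpa using htop
    | succ d ih =>
      intro hd
      have hprev := ih (by omega)
      set i : Fin n := ⟨n - 1 - d, by omega⟩ with hidef
      have hipos : 0 < i.1 := by
        simp only [hidef]
        omega
      have h2 := N.smul_mem (gF k n (Q ^ n)) hprev
      rw [hF i hipos] at h2
      have hg : gammaCoef k n Q t r i.1 ≠ 0 := by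
        refine aux_gamma_ne k n hn hodd Q hQ t ht1 ht r i.1 (by omega) i.2
      have h3 := hsmulk (gammaCoef k n Q t r i.1)⁻¹ _ h2
      rw [smul_smul, inv_mul_cancel₀ hg, one_smul] at h3
      have : (⟨i.1 - 1, lt_of_le_of_lt (Nat.sub_le _ _) i.2⟩ : Fin n)
          = ⟨n - 1 - (d + 1), by omega⟩ := Fin.ext (by simp only [hidef]; omega)
      rwa [this] at h3
  -- conclude N = ⊤
  rw [eq_top_iff]
  intro y _
  have hall : ∀ i : Fin n, v i ∈ N := by
    intro i
    have hd : n - 1 - (n - 1 - i.1) = i.1 := by have := i.2; omega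
    have := stepC (n - 1 - i.1) (by have := i.2; omega)
    have heq : (⟨n - 1 - (n - 1 - i.1), by omega⟩ : Fin n) = i := Fin.ext (by simp only [Fin.val_mk]; have := i.2; omega)
    rwa [heq] at this
  have hsum := v.sum_repr y
  rw [← hsum]
  exact Submodule.sum_mem N fun l _ => hsmulk _ _ (hall l)

end SmallQuasiQuantumGroup
end
end

section
/- For all 1 ≤ i ≤ n−1 and 1 ≤ j, k ≤ n, the identity F · A^{ij}_k · T^i_j = 0 holds in H. -/
open scoped TensorProduct

noncomputable section

namespace SmallQuasiQuantumGroup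

variable (k : Type) [Field k]

section S7A
variable {k} (n : ℕ) (q : k)
local notation "E" => gE k n q
local notation "F" => gF k n q
local notation "K" => gK k n q
local notation "Ki" => gKi k n q

lemma rKKi : K * Ki = 1 := by
  have h := RingQuot.mkAlgHom_rel k (QGRel.KKinv (k:=k) (n:=n) (q:=q))
  rw [map_mul, map_one] at h; exact h

lemma rKiK : Ki * K = 1 := by
  have h := RingQuot.mkAlgHom_rel k (QGRel.KinvK (k:=k) (n:=n) (q:=q))
  rw [map_mul, map_one] at h; exact h

lemma KKi_cancel (x : QG k n q) : K * (Ki * x) = x := by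
  rw [← mul_assoc, rKKi, one_mul]

lemma KiK_cancel (x : QG k n q) : Ki * (K * x) = x := by
  rw [← mul_assoc, rKiK, one_mul]

lemma rKE : K * E = q ^ 2 • (E * K) := by
  have h : K * E * Ki = q ^ 2 • E := by
    have h0 := RingQuot.mkAlgHom_rel k (QGRel.KE (k:=k) (n:=n) (q:=q))
    rw [map_mul, map_mul, map_smul] at h0; exact h0
  have h2 := congrArg (· * K) h
  simp only [smul_mul_assoc] at h2
  rwa [mul_assoc (K * E), rKiK, mul_one] at h2

lemma rKF : K * F = (q ^ 2)⁻¹ • (F * K) := by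
  have h : K * F * Ki = (q ^ 2)⁻¹ • F := by
    have h0 := RingQuot.mkAlgHom_rel k (QGRel.KF (k:=k) (n:=n) (q:=q))
    rw [map_mul, map_mul, map_smul] at h0; exact h0
  have h2 := congrArg (· * K) h
  simp only [smul_mul_assoc] at h2
  rwa [mul_assoc (K * F), rKiK, mul_one] at h2

lemma rKiE (hq : q ≠ 0) : Ki * E = (q ^ 2)⁻¹ • (E * Ki) := by
  have h : E * Ki = q ^ 2 • (Ki * E) := by
    conv_lhs => rw [← KiK_cancel n q (E * Ki), ← mul_assoc K E, rKE]
    rw [smul_mul_assoc, mul_smul_comm, mul_assoc, rKKi, mul_one]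
  rw [h, inv_smul_smul₀ (pow_ne_zero 2 hq)]

lemma rKiF (hq : q ≠ 0) : Ki * F = q ^ 2 • (F * Ki) := by
  have h : F * Ki = (q ^ 2)⁻¹ • (Ki * F) := by
    conv_lhs => rw [← KiK_cancel n q (F * Ki), ← mul_assoc K F, rKF]
    rw [smul_mul_assoc, mul_smul_comm, mul_assoc, rKKi, mul_one]
  rw [h, smul_inv_smul₀ (pow_ne_zero 2 hq)]

lemma rEF : E * F = F * E + (q - q⁻¹)⁻¹ • (K - Ki) := by
  have h : E * F - F * E = (q - q⁻¹)⁻¹ • (K - Ki) := by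
    have h0 := RingQuot.mkAlgHom_rel k (QGRel.EF (k:=k) (n:=n) (q:=q))
    rw [map_sub, map_mul, map_mul, map_smul, map_sub] at h0; exact h0
  rw [sub_eq_iff_eq_add] at h
  rw [h, add_comm]

lemma rEn : E ^ n = 0 := by
  have h := RingQuot.mkAlgHom_rel k (QGRel.Epow (k:=k) (n:=n) (q:=q))
  rwa [map_pow, map_zero] at h

lemma rFn : F ^ n = 0 := by
  have h := RingQuot.mkAlgHom_rel k (QGRel.Fpow (k:=k) (n:=n) (q:=q))
  rwa [map_pow, map_zero] at h

lemma rKn2 : K ^ n ^ 2 = 1 := by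
  have h := RingQuot.mkAlgHom_rel k (QGRel.Kpow (k:=k) (n:=n) (q:=q))
  rwa [map_pow, map_one] at h

lemma rKFp (b : ℕ) : K * F ^ b = (q⁻¹) ^ (2 * b) • (F ^ b * K) := by
  induction b with
  | zero => simp
  | succ b ih =>
    rw [pow_succ, ← mul_assoc, ih, smul_mul_assoc, mul_assoc, rKF, mul_smul_comm, smul_smul,
      ← mul_assoc, ← pow_succ]
    congr 1
    rw [← inv_pow]; ring

lemma rKiFp (hq : q ≠ 0) (b : ℕ) : Ki * F ^ b = q ^ (2 * b) • (F ^ b * Ki) := by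
  induction b with
  | zero => simp
  | succ b ih =>
    rw [pow_succ, ← mul_assoc, ih, smul_mul_assoc, mul_assoc, rKiF n q hq, mul_smul_comm,
      smul_smul, ← mul_assoc, ← pow_succ]
    congr 1
    ring

lemma rFE : F * E = E * F - (q - q⁻¹)⁻¹ • (K - Ki) := by
  rw [rEF]; abel

def gS (a : ℕ) : QG k n q :=
  ∑ t ∈ Finset.range a, (q ^ (2*t) • gK k n q - (q⁻¹) ^ (2*t) • gKi k n q)

lemma gS_E (hq : q ≠ 0) (a : ℕ) :
    gS n q a * E = E * (gS n q (a+1) - (K - Ki)) := by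
  have h0 : gS n q (a+1) - (K - Ki) =
      ∑ t ∈ Finset.range a, (q ^ (2*(t+1)) • K - (q⁻¹) ^ (2*(t+1)) • Ki) := by
    rw [gS, Finset.sum_range_succ']
    simp
  rw [h0, gS, Finset.sum_mul, Finset.mul_sum]
  refine Finset.sum_congr rfl fun t _ => ?_
  rw [sub_mul, smul_mul_assoc, smul_mul_assoc, rKE, rKiE n q hq, mul_sub, mul_smul_comm,
    mul_smul_comm, smul_smul, smul_smul]
  congr 1
  · congr 1; ring
  · congr 1; rw [← inv_pow]; ring

lemma Fcomm (hq : q ≠ 0) : ∀ a : ℕ,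
    F * E ^ (a+1) = E ^ (a+1) * F - (q - q⁻¹)⁻¹ • (E ^ a * gS n q (a+1))
  | 0 => by
    have h1 : gS n q 1 = K - Ki := by simp [gS]
    rw [h1, pow_one, pow_zero, one_mul, rFE]
  | (a+1) => by
    have step : F * E ^ (a+1+1) = (F * E ^ (a+1)) * E := by rw [mul_assoc, ← pow_succ]
    rw [step, Fcomm hq a, sub_mul, smul_mul_assoc, mul_assoc (E ^ (a+1)) F, rFE,
      mul_assoc (E ^ a), gS_E n q hq]
    rw [mul_sub (E ^ (a+1)), mul_smul_comm, ← mul_assoc (E ^ (a+1)) E F, ← pow_succ,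
      ← mul_assoc (E ^ a) E, ← pow_succ, mul_sub (E ^ (a+1)) (gS n q (a+1+1)), smul_sub]
    abel

end S7A
section S7B
variable {k : Type} [Field k] [CharZero k] (n : ℕ) (Q : k)

lemma Qzcongr (hn : 0 < n) (hQ : IsPrimitiveRoot Q (n^2)) {a b : ℤ} (c : ℤ)
    (h : a = b + (n:ℤ)^2 * c) : Q ^ a = Q ^ b := by
  have h0 : Q ≠ 0 := hQ.ne_zero (by positivity)
  have h1 : Q ^ ((n:ℤ)^2) = 1 := by
    have h2 : ((n:ℤ)^2) = ((n^2 : ℕ) : ℤ) := by push_cast; ring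
    rw [h2, zpow_natCast, hQ.pow_eq_one]
  rw [h, zpow_add₀ h0, zpow_mul, h1, one_zpow, mul_one]

lemma Qcongr (hn : 0 < n) (hQ : IsPrimitiveRoot Q (n^2)) {a b : ℕ} (c : ℤ)
    (h : (a:ℤ) = (b:ℤ) + (n:ℤ)^2 * c) : Q ^ a = Q ^ b := by
  have h3 := Qzcongr n Q hn hQ c h
  rwa [zpow_natCast, zpow_natCast] at h3

lemma shift_sum {M : Type} [AddCommMonoid M] (f g : ℕ → M) (n' : ℕ)
    (hmid : ∀ t < n', f t = g (t+1)) (hend : f n' = g 0) :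
    ∑ t ∈ Finset.range (n'+1), f t = ∑ t ∈ Finset.range (n'+1), g t := by
  rw [Finset.sum_range_succ, Finset.sum_range_succ']
  exact congrArg₂ (· + ·)
    (Finset.sum_congr rfl fun t ht => hmid t (Finset.mem_range.mp ht)) hend

lemma Kn_e (hn : 2 < n) (hQ : IsPrimitiveRoot Q (n^2)) (i : ℕ) (hi : i ≤ n) :
    gK k n (Q^n) ^ n * eIdem k n (Q^n) i = Q ^ ((n-i)*n) • eIdem k n (Q^n) i := by
  obtain ⟨n', rfl⟩ : ∃ m, n = m + 1 := ⟨n - 1, by omega⟩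
  rw [eIdem, mul_smul_comm, smul_comm]
  congr 1
  rw [Finset.mul_sum, Finset.smul_sum]
  apply shift_sum
  · intro t ht
    rw [mul_smul_comm, ← pow_add, smul_smul]
    have hexp : (n'+1) + t*(n'+1) = (t+1)*(n'+1) := by ring
    rw [hexp]
    congr 1
    rw [← pow_mul, ← pow_mul, ← pow_add]
    apply Qcongr _ Q (by omega) hQ (-1)
    push_cast [Nat.cast_sub hi]
    ring
  · rw [mul_smul_comm, ← pow_add]
    have hexp : (n'+1) + n' * (n'+1) = (n'+1)^2 := by ring
    rw [hexp, rKn2]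
    simp only [Nat.zero_mul, Nat.mul_zero, pow_zero, one_smul]
    congr 1
    rw [← pow_mul]
    apply Qcongr _ Q (by omega) hQ ((i:ℤ) - 1)
    push_cast [Nat.cast_sub hi]
    ring

lemma m0_le (hn : 2 < n) (i j : ℕ) (hi : i ≤ n - 1) (hj1 : 1 ≤ j) (hj : j ≤ n) :
    (j-1)*n + i ≤ n^2 := by
  have h2 : (n-1)*n + n = n^2 := by
    have h3 : n - 1 + 1 = n := by omega
    calc (n-1)*n + n = ((n-1)+1)*n := by ring
      _ = n^2 := by rw [h3, pow_two]
  have h1 : (j-1)*n ≤ (n-1)*n := Nat.mul_le_mul_right n (by omega)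
  omega

variable (i j : ℕ)

lemma K_T (hn : 2 < n) (hQ : IsPrimitiveRoot Q (n^2)) (hi1 : 1 ≤ i) (hi : i ≤ n-1)
    (hj1 : 1 ≤ j) (hj : j ≤ n) :
    gK k n (Q^n) * Tij k n Q i j = Q ^ (n^2 - ((j-1)*n + i)) • Tij k n Q i j := by
  have hm := m0_le n hn i j hi hj1 hj
  have hin : i ≤ n := by omega
  have hKe := Kn_e n Q hn hQ i hin
  obtain ⟨n', hn'⟩ : ∃ m, n = m + 1 := ⟨n - 1, by omega⟩
  subst hn'
  rw [Tij, mul_smul_comm, smul_comm]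
  congr 1
  rw [Finset.mul_sum, Finset.smul_sum]
  apply shift_sum
  · intro t ht
    rw [mul_smul_comm, ← mul_assoc, ← pow_succ', smul_smul]
    congr 1
    rw [← pow_add]
    apply Qcongr _ Q (by omega) hQ (-1)
    push_cast [Nat.cast_sub hm, Nat.cast_sub hj1]
    ring
  · rw [mul_smul_comm, ← mul_assoc, ← pow_succ', hKe, smul_smul]
    simp only [Nat.mul_zero, pow_zero, one_mul, one_smul]
    congr 1
    rw [← pow_add]
    apply Qcongr _ Q (by omega) hQ ((j:ℤ) - 1)
    push_cast [Nat.cast_sub hm, Nat.cast_sub hj1, Nat.cast_sub hin]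
    ring

lemma Ki_T (hn : 2 < n) (hQ : IsPrimitiveRoot Q (n^2)) (hi1 : 1 ≤ i) (hi : i ≤ n-1)
    (hj1 : 1 ≤ j) (hj : j ≤ n) :
    gKi k n (Q^n) * Tij k n Q i j = Q ^ ((j-1)*n + i) • Tij k n Q i j := by
  have hm := m0_le n hn i j hi hj1 hj
  have h := K_T n Q i j hn hQ hi1 hi hj1 hj
  have h2 := congrArg (fun x => Q ^ ((j-1)*n + i) • (gKi k n (Q^n) * x)) h
  rw [KiK_cancel] at h2
  rw [mul_smul_comm, smul_smul, ← pow_add] at h2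
  rw [Nat.add_sub_cancel' hm, hQ.pow_eq_one, one_smul] at h2
  exact h2.symm

lemma Kpow_T (hn : 2 < n) (hQ : IsPrimitiveRoot Q (n^2)) (hi1 : 1 ≤ i) (hi : i ≤ n-1)
    (hj1 : 1 ≤ j) (hj : j ≤ n) (s : ℕ) :
    gK k n (Q^n) ^ s * Tij k n Q i j = Q ^ ((n^2 - ((j-1)*n+i))*s) • Tij k n Q i j := by
  induction s with
  | zero => simp
  | succ s ih =>
    rw [pow_succ, mul_assoc, K_T n Q i j hn hQ hi1 hi hj1 hj, mul_smul_comm, ih, smul_smul,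
      ← pow_add]
    congr 2
    ring

lemma e_T (hn : 2 < n) (hQ : IsPrimitiveRoot Q (n^2)) (hi1 : 1 ≤ i) (hi : i ≤ n-1)
    (hj1 : 1 ≤ j) (hj : j ≤ n) :
    eIdem k n (Q^n) i * Tij k n Q i j = Tij k n Q i j := by
  rw [eIdem, smul_mul_assoc, Finset.sum_mul]
  have hterm : ∀ t ∈ Finset.range n,
      ((Q^n) ^ (t*i) • gK k n (Q^n) ^ (t*n)) * Tij k n Q i j = Tij k n Q i j := by
    intro t _
    rw [smul_mul_assoc, Kpow_T n Q i j hn hQ hi1 hi hj1 hj (t*n), smul_smul, ← pow_mul,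
      ← pow_add]
    have h1 : Q ^ (n*(t*i) + (n^2 - ((j-1)*n+i))*(t*n)) = Q ^ (0:ℕ) := by
      apply Qcongr _ Q (by omega) hQ ((t:ℤ)*((n:ℤ)+1-(j:ℤ)))
      push_cast [Nat.cast_sub (m0_le n hn i j hi hj1 hj), Nat.cast_sub hj1]
      ring
    rw [h1, pow_zero, one_smul]
  rw [Finset.sum_congr rfl hterm, Finset.sum_const, Finset.card_range,
    ← Nat.cast_smul_eq_nsmul k, smul_smul,
    inv_mul_cancel₀ (Nat.cast_ne_zero.mpr (by omega : n ≠ 0)), one_smul]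


def sigmaS (n : ℕ) (Q : k) (m₀ a b : ℕ) : k :=
  ∑ t ∈ Finset.range a,
    ((Q^n) ^ (2*t) * ((Q^n)⁻¹) ^ (2*b) * Q ^ (n^2 - m₀) -
     ((Q^n)⁻¹) ^ (2*t) * (Q^n) ^ (2*b) * Q ^ m₀)

lemma KF_T (hn : 2 < n) (hQ : IsPrimitiveRoot Q (n^2)) (hi1 : 1 ≤ i) (hi : i ≤ n-1)
    (hj1 : 1 ≤ j) (hj : j ≤ n) (b : ℕ) :
    gK k n (Q^n) * (gF k n (Q^n) ^ b * Tij k n Q i j) =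
      (((Q^n)⁻¹) ^ (2*b) * Q ^ (n^2 - ((j-1)*n+i))) • (gF k n (Q^n) ^ b * Tij k n Q i j) := by
  rw [← mul_assoc, rKFp, smul_mul_assoc, mul_assoc, K_T n Q i j hn hQ hi1 hi hj1 hj,
    mul_smul_comm, smul_smul]

lemma KiF_T (hn : 2 < n) (hQ : IsPrimitiveRoot Q (n^2)) (hi1 : 1 ≤ i) (hi : i ≤ n-1)
    (hj1 : 1 ≤ j) (hj : j ≤ n) (b : ℕ) :
    gKi k n (Q^n) * (gF k n (Q^n) ^ b * Tij k n Q i j) =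
      ((Q^n) ^ (2*b) * Q ^ ((j-1)*n+i)) • (gF k n (Q^n) ^ b * Tij k n Q i j) := by
  have hq0 : (Q:k)^n ≠ 0 := pow_ne_zero n (hQ.ne_zero (by positivity))
  rw [← mul_assoc, rKiFp n (Q^n) hq0, smul_mul_assoc, mul_assoc,
    Ki_T n Q i j hn hQ hi1 hi hj1 hj, mul_smul_comm, smul_smul]

lemma gS_FT (hn : 2 < n) (hQ : IsPrimitiveRoot Q (n^2)) (hi1 : 1 ≤ i) (hi : i ≤ n-1)
    (hj1 : 1 ≤ j) (hj : j ≤ n) (a b : ℕ) :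
    gS n (Q^n) a * (gF k n (Q^n) ^ b * Tij k n Q i j) =
      sigmaS n Q ((j-1)*n+i) a b • (gF k n (Q^n) ^ b * Tij k n Q i j) := by
  rw [gS, sigmaS, Finset.sum_mul, Finset.sum_smul]
  refine Finset.sum_congr rfl fun t _ => ?_
  rw [sub_mul, smul_mul_assoc, smul_mul_assoc, KF_T n Q i j hn hQ hi1 hi hj1 hj,
    KiF_T n Q i j hn hQ hi1 hi hj1 hj, smul_smul, smul_smul, sub_smul]
  congr 1
  · congr 1; ring
  · congr 1
    rw [← inv_pow]; ring

lemma main_term (hn : 2 < n) (hQ : IsPrimitiveRoot Q (n^2)) (hi1 : 1 ≤ i) (hi : i ≤ n-1)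
    (hj1 : 1 ≤ j) (hj : j ≤ n) (a b : ℕ) :
    gF k n (Q^n) * (gE k n (Q^n) ^ a * (gF k n (Q^n) ^ b * Tij k n Q i j)) =
      gE k n (Q^n) ^ a * (gF k n (Q^n) ^ (b+1) * Tij k n Q i j) -
      (((Q^n) - (Q^n)⁻¹)⁻¹ * sigmaS n Q ((j-1)*n+i) a b) •
        (gE k n (Q^n) ^ (a-1) * (gF k n (Q^n) ^ b * Tij k n Q i j)) := by
  cases a with
  | zero =>
    simp only [pow_zero, one_mul, sigmaS, Finset.range_zero, Finset.sum_empty, mul_zero,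
      zero_smul, sub_zero]
    rw [← mul_assoc, ← pow_succ']
  | succ a =>
    have hq0 : (Q:k)^n ≠ 0 := pow_ne_zero n (hQ.ne_zero (by positivity))
    have e1 : gF k n (Q^n) * (gF k n (Q^n) ^ b * Tij k n Q i j)
        = gF k n (Q^n) ^ (b+1) * Tij k n Q i j := by
      rw [← mul_assoc, ← pow_succ']
    have e2 : gE k n (Q^n) ^ a * gS n (Q^n) (a+1) * (gF k n (Q^n) ^ b * Tij k n Q i j)
        = sigmaS n Q ((j-1)*n+i) (a+1) b •
            (gE k n (Q^n) ^ a * (gF k n (Q^n) ^ b * Tij k n Q i j)) := by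
      rw [mul_assoc, gS_FT n Q i j hn hQ hi1 hi hj1 hj, mul_smul_comm]
    calc gF k n (Q^n) * (gE k n (Q^n) ^ (a+1) * (gF k n (Q^n) ^ b * Tij k n Q i j))
        = (gF k n (Q^n) * gE k n (Q^n) ^ (a+1)) * (gF k n (Q^n) ^ b * Tij k n Q i j) := by
          rw [mul_assoc]
      _ = (gE k n (Q^n) ^ (a+1) * gF k n (Q^n) -
            ((Q^n) - (Q^n)⁻¹)⁻¹ • (gE k n (Q^n) ^ a * gS n (Q^n) (a+1))) *
            (gF k n (Q^n) ^ b * Tij k n Q i j) := by rw [Fcomm n (Q^n) hq0 a]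
      _ = gE k n (Q^n) ^ (a+1) * (gF k n (Q^n) * (gF k n (Q^n) ^ b * Tij k n Q i j)) -
            ((Q^n) - (Q^n)⁻¹)⁻¹ •
              (gE k n (Q^n) ^ a * gS n (Q^n) (a+1) * (gF k n (Q^n) ^ b * Tij k n Q i j)) := by
          rw [sub_mul, smul_mul_assoc, mul_assoc, mul_assoc]
      _ = gE k n (Q^n) ^ (a+1) * (gF k n (Q^n) ^ (b+1) * Tij k n Q i j) -
            (((Q^n) - (Q^n)⁻¹)⁻¹ * sigmaS n Q ((j-1)*n+i) (a+1) b) •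
              (gE k n (Q^n) ^ (a+1-1) * (gF k n (Q^n) ^ b * Tij k n Q i j)) := by
          rw [e1, e2, smul_smul, Nat.add_sub_cancel]

lemma aOne_eq (hn : 2 < n) (hQ : IsPrimitiveRoot Q (n^2)) (hi1 : 1 ≤ i) (hi : i ≤ n-1)
    (hj1 : 1 ≤ j) (hj : j ≤ n) (s kk : ℕ) (h2 : 2 ≤ kk) (hkn : kk ≤ n) :
    aOne k n Q i j kk = ((Q^n) - (Q^n)⁻¹)⁻¹ *
      ((Q^n) ^ (2*s) * ((Q^n)⁻¹) ^ (2*(n-kk+s+1)) * Q ^ (n^2 - ((j-1)*n+i)) -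
       ((Q^n)⁻¹) ^ (2*s) * (Q^n) ^ (2*(n-kk+s+1)) * Q ^ ((j-1)*n+i)) := by
  have hQ0 : Q ≠ 0 := hQ.ne_zero (by positivity)
  have hm := m0_le n hn i j hi hj1 hj
  have hb : n - kk + s + 1 = n + s + 1 - kk := by omega
  have hb2 : kk ≤ n + s + 1 := by omega
  rw [aOne, div_eq_inv_mul, hb]
  congr 1
  simp only [inv_pow, ← zpow_natCast, ← zpow_neg, ← zpow_mul, ← zpow_add₀ hQ0]
  congr 1
  · apply Qzcongr n Q (by omega) hQ 1
    push_cast [Nat.cast_sub hm, Nat.cast_sub hj1, Nat.cast_sub hb2]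
    ring
  · apply Qzcongr n Q (by omega) hQ (-2)
    push_cast [Nat.cast_sub hm, Nat.cast_sub hj1, Nat.cast_sub hb2]
    ring

lemma key (hn : 2 < n) (hQ : IsPrimitiveRoot Q (n^2)) (hi1 : 1 ≤ i) (hi : i ≤ n-1)
    (hj1 : 1 ≤ j) (hj : j ≤ n) : ∀ s kk : ℕ, 1 ≤ s → s < kk → kk ≤ n →
    aCoef k n Q i j kk s = ((Q^n) - (Q^n)⁻¹)⁻¹ * sigmaS n Q ((j-1)*n+i) s (n - kk + s) := by
  intro s
  induction s with
  | zero => intro kk h1 _ _; omega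
  | succ s ih =>
    intro kk hs1 hskk hkn
    rcases Nat.eq_zero_or_pos s with rfl | hs
    · have hkk2 : 2 ≤ kk := by omega
      have h1 : aCoef k n Q i j kk 1 = aOne k n Q i j kk := by
        simp only [aCoef]
        rw [if_neg (by omega)]
      rw [h1, sigmaS, Finset.sum_range_one]
      have h3 := aOne_eq n Q i j hn hQ hi1 hi hj1 hj 0 kk hkk2 hkn
      have h4 : n - kk + 0 + 1 = n - kk + (0+1) := by omega
      rw [h4] at h3
      exact h3
    · obtain ⟨s', rfl⟩ := Nat.exists_eq_succ_of_ne_zero hs.ne'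
      have hkk2 : 2 ≤ kk := by omega
      have hrw : aCoef k n Q i j kk (s'+1+1) =
          aOne k n Q i j kk + aCoef k n Q i j (kk-1) (s'+1) := by
        simp only [aCoef]
        rw [if_neg (by omega)]
      rw [hrw, ih (kk-1) (by omega) (by omega) (by omega)]
      have harg : n - (kk-1) + (s'+1) = n - kk + (s'+1+1) := by omega
      rw [harg]
      conv_rhs => rw [sigmaS, Finset.sum_range_succ]
      rw [mul_add, add_comm (aOne k n Q i j kk)]
      congr 1
      have h3 := aOne_eq n Q i j hn hQ hi1 hi hj1 hj (s'+1) kk hkk2 hkn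
      have h4 : n - kk + (s'+1) + 1 = n - kk + (s'+1+1) := by omega
      rw [h4] at h3
      exact h3


lemma A_T (hn : 2 < n) (hQ : IsPrimitiveRoot Q (n^2)) (hi1 : 1 ≤ i) (hi : i ≤ n-1)
    (hj1 : 1 ≤ j) (hj : j ≤ n) (kk : ℕ) :
    Aelem k n Q i j kk * Tij k n Q i j =
      ∑ p ∈ Finset.range kk, (∏ t ∈ Finset.range (p+1), aCoef k n Q i j kk (kk-t)) •
        (gE k n (Q^n) ^ (kk-1-p) * (gF k n (Q^n) ^ (n-1-p) * Tij k n Q i j)) := by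
  rw [Aelem, Finset.sum_mul]
  refine Finset.sum_congr rfl fun p _ => ?_
  rw [smul_mul_assoc, mul_assoc, e_T n Q i j hn hQ hi1 hi hj1 hj, mul_assoc]

end S7B


/-- For all `1 ≤ i ≤ n-1` and `1 ≤ j, k ≤ n`, the identity
`F · A^{ij}_k · T^i_j = 0` holds in `H`. -/
theorem statement7 [IsAlgClosed k] [CharZero k] (n : ℕ) (hn : 2 < n) (hodd : Odd n)
    (Q : k) (hQ : IsPrimitiveRoot Q (n ^ 2)) (i j kk : ℕ) (hi1 : 1 ≤ i) (hi : i ≤ n - 1)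
    (hj1 : 1 ≤ j) (hj : j ≤ n) (hk1 : 1 ≤ kk) (hk : kk ≤ n) :
    gF k n (Q ^ n) * Aelem k n Q i j kk * Tij k n Q i j = 0 := by
  obtain ⟨k', rfl⟩ : ∃ m, kk = m+1 := ⟨kk-1, by omega⟩
  rw [mul_assoc, A_T n Q i j hn hQ hi1 hi hj1 hj (k'+1), Finset.mul_sum]
  have h1 : ∀ p ∈ Finset.range (k'+1),
      gF k n (Q^n) * ((∏ t ∈ Finset.range (p+1), aCoef k n Q i j (k'+1) (k'+1-t)) •
        (gE k n (Q^n) ^ (k'+1-1-p) * (gF k n (Q^n) ^ (n-1-p) * Tij k n Q i j))) =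
      (∏ t ∈ Finset.range (p+1), aCoef k n Q i j (k'+1) (k'+1-t)) •
        (gE k n (Q^n) ^ (k'+1-1-p) * (gF k n (Q^n) ^ ((n-1-p)+1) * Tij k n Q i j)) -
      ((∏ t ∈ Finset.range (p+1), aCoef k n Q i j (k'+1) (k'+1-t)) *
        (((Q^n) - (Q^n)⁻¹)⁻¹ * sigmaS n Q ((j-1)*n+i) (k'+1-1-p) (n-1-p))) •
        (gE k n (Q^n) ^ ((k'+1-1-p)-1) * (gF k n (Q^n) ^ (n-1-p) * Tij k n Q i j)) := by
    intro p hp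
    rw [mul_smul_comm, main_term n Q i j hn hQ hi1 hi hj1 hj, smul_sub, smul_smul]
  rw [Finset.sum_congr rfl h1, Finset.sum_sub_distrib]
  rw [Finset.sum_range_succ']
  rw [show n-1-0+1 = n from by omega, rFn, zero_mul, mul_zero, smul_zero, add_zero]
  rw [Finset.sum_range_succ]
  rw [show k'+1-1-k' = 0 from by omega]
  have hs0 : sigmaS n Q ((j-1)*n+i) 0 (n-1-k') = 0 := by simp [sigmaS]
  rw [hs0, mul_zero, mul_zero, zero_smul, add_zero, ← Finset.sum_sub_distrib]
  apply Finset.sum_eq_zero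
  intro p hp
  have hp' : p < k' := Finset.mem_range.mp hp
  refine sub_eq_zero.mpr ?_
  have e1 : k'+1-1-(p+1) = k'-p-1 := by omega
  have e2 : n-1-(p+1)+1 = n-1-p := by omega
  have e3 : k'+1-1-p = k'-p := by omega
  have e5 : k'+1-(p+1) = k'-p := by omega
  have e6 : n-(k'+1)+(k'-p) = n-1-p := by omega
  rw [e1, e2, e3, Finset.prod_range_succ, e5,
    key n Q i j hn hQ hi1 hi hj1 hj (k'-p) (k'+1) (by omega) (by omega) hk, e6]


end SmallQuasiQuantumGroup
end
end
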